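/- If Σ_B = Xᵀ·Σ_A·X for a permutation matrix X, then the row space of Σ_B equals the row space of Σ_A multiplied by X; hence B = A·X, i.e., B and A are permutation equivalent via X. -/

import Mathlib

open Matrix

/-- The orthogonal complement (dual code) of a linear code `U ⊆ F^n` with respect to the
standard bilinear form `⟨x, y⟩ = ∑ i, x i * y i`. -/
def dualCode {F : Type*} [Field F] {n : ℕ} (U : Submodule F (Fin n → F)) :
    Submodule F (Fin n → F) where
  carrier := {z | ∀ u ∈ U, ∑ i, u i * z i = 0}
  add_mem' := by
    intro a b ha hb u hu
    have h1 := ha u hu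
    have h2 := hb u hu
    simp only [Set.mem_setOf_eq] at *
    calc ∑ i, u i * (a + b) i = (∑ i, u i * a i) + ∑ i, u i * b i := by
          rw [← Finset.sum_add_distrib]
          exact Finset.sum_congr rfl fun i _ => by simp [mul_add]
      _ = 0 := by rw [h1, h2, add_zero]
  zero_mem' := by
    intro u hu
    simp
  smul_mem' := by
    intro c a ha u hu
    have h := ha u hu
    simp only [Set.mem_setOf_eq] at *
    calc ∑ i, u i * (c • a) i = c * ∑ i, u i * a i := by
          rw [Finset.mul_sum]
          exact Finset.sum_congr rfl fun i _ => by simp [smul_eq_mul]; ring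
      _ = 0 := by rw [h, mul_zero]

/-!
Since `U ∩ U^⊥ = 0`, the Gram matrix `G Gᵀ` of a generator matrix `G` of `U` is invertible:
if `G Gᵀ c = 0` then `cG` lies in `U ∩ U^⊥`. Hence `Σ_U = Gᵀ (G Gᵀ)⁻¹ G` satisfies `G Σ_U = G`
and its row space is exactly `U`. Right multiplication by `Xᵀ Σ_A X` is right multiplication by
`Xᵀ`, then `Σ_A`, then `X`; the first is bijective, so the row space of `Σ_B` is that of `Σ_A`
moved by `X`.
-/

namespace Matrix

section CommRing

variable {R : Type*} [CommRing R] {l m n : Type*} [Fintype l] [Fintype m]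

theorem range_vecMulLinear_mul_le (A : Matrix l m R) (B : Matrix m n R) :
    LinearMap.range (A * B).vecMulLinear ≤ LinearMap.range B.vecMulLinear := by
  rintro _ ⟨v, rfl⟩
  exact ⟨v ᵥ* A, vecMul_vecMul v A B⟩

theorem range_vecMulLinear_transpose_mul_inv_mul [Fintype n] [DecidableEq m] (G : Matrix m n R)
    (hG : IsUnit (G * Gᵀ)) :
    LinearMap.range (Gᵀ * (G * Gᵀ)⁻¹ * G).vecMulLinear =
      Submodule.span R (Set.range G.row) := by
  have hproj : G * (Gᵀ * (G * Gᵀ)⁻¹ * G) = G := by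
    rw [← Matrix.mul_assoc, ← Matrix.mul_assoc,
      mul_nonsing_inv _ ((isUnit_iff_isUnit_det _).mp hG), Matrix.one_mul]
  rw [← range_vecMulLinear]
  refine le_antisymm (range_vecMulLinear_mul_le _ _) ?_
  conv_lhs => rw [← hproj]
  exact range_vecMulLinear_mul_le _ _

theorem range_vecMulLinear_transpose_mul_mul [DecidableEq m] {X : Matrix m m R} (hX : IsUnit X)
    (M : Matrix m m R) :
    LinearMap.range (Xᵀ * M * X).vecMulLinear =
      Submodule.map X.vecMulLinear (LinearMap.range M.vecMulLinear) := by
  have hcomp :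
      (Xᵀ * M * X).vecMulLinear = X.vecMulLinear ∘ₗ M.vecMulLinear ∘ₗ Xᵀ.vecMulLinear :=
    LinearMap.ext fun v => by
      simp only [LinearMap.comp_apply, vecMulLinear_apply, vecMul_vecMul, Matrix.mul_assoc]
  have hsurj : LinearMap.range Xᵀ.vecMulLinear = ⊤ :=
    LinearMap.range_eq_top.mpr (vecMul_surjective_iff_isUnit.mpr ((isUnit_transpose X).mpr hX))
  rw [hcomp, LinearMap.range_comp, LinearMap.range_comp_of_range_eq_top _ hsurj]

theorem isUnit_permMatrix [DecidableEq m] (σ : Equiv.Perm m) : IsUnit (σ.permMatrix R) := by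
  rw [isUnit_iff_isUnit_det, det_permutation]
  exact (Equiv.Perm.sign σ).isUnit.map (Int.castRingHom R)

end CommRing

theorem isUnit_mul_transpose_of_inf_dualCode_eq_bot {F : Type*} [Field F] {k n : ℕ}
    {G : Matrix (Fin k) (Fin n) F} (hind : LinearIndependent F G)
    (hhull : Submodule.span F (Set.range G) ⊓ dualCode (Submodule.span F (Set.range G)) = ⊥) :
    IsUnit (G * Gᵀ) := by
  rw [isUnit_iff_isUnit_det, isUnit_iff_ne_zero, Ne, ← exists_mulVec_eq_zero_iff]
  rintro ⟨c, hc0, hc⟩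
  have hrow : LinearMap.range G.vecMulLinear = Submodule.span F (Set.range G) :=
    range_vecMulLinear G
  have hmem : c ᵥ* G ∈ Submodule.span F (Set.range G) := hrow ▸ LinearMap.mem_range_self _ c
  have hdual : c ᵥ* G ∈ dualCode (Submodule.span F (Set.range G)) := by
    intro u hu
    rw [← hrow] at hu
    obtain ⟨d, rfl⟩ := hu
    change (d ᵥ* G) ⬝ᵥ (c ᵥ* G) = 0
    rw [← dotProduct_mulVec, ← mulVec_transpose, mulVec_mulVec, hc, dotProduct_zero]
  have hzero : c ᵥ* G = 0 := by
    simpa [hhull] using Submodule.mem_inf.mpr ⟨hmem, hdual⟩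
  exact hc0 (vecMul_injective_iff.mpr hind (hzero.trans (zero_vecMul G).symm))

end Matrix

/-- If `Σ_B = Xᵀ Σ_A X` for a permutation matrix `X`, then the row space
of `Σ_B` equals the row space of `Σ_A` multiplied by `X`; hence `B = A·X`, i.e. `B` and `A`
are permutation equivalent via `X`. -/
theorem statement11 {F : Type*} [Field F] {n k : ℕ}
    (A B : Submodule F (Fin n → F))
    (GA GB : Matrix (Fin k) (Fin n) F)
    (hAind : LinearIndependent F GA)
    (hAspan : Submodule.span F (Set.range GA) = A)
    (hBind : LinearIndependent F GB)
    (hBspan : Submodule.span F (Set.range GB) = B)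
    (hAhull : A ⊓ dualCode A = ⊥)
    (hBhull : B ⊓ dualCode B = ⊥)
    (σ : Equiv.Perm (Fin n))
    (h : GBᵀ * (GB * GBᵀ)⁻¹ * GB =
      (σ.permMatrix F)ᵀ * (GAᵀ * (GA * GAᵀ)⁻¹ * GA) * σ.permMatrix F) :
    LinearMap.range (Matrix.vecMulLinear (GBᵀ * (GB * GBᵀ)⁻¹ * GB)) =
      Submodule.map (Matrix.vecMulLinear (σ.permMatrix F))
        (LinearMap.range (Matrix.vecMulLinear (GAᵀ * (GA * GAᵀ)⁻¹ * GA))) ∧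
    B = Submodule.map (Matrix.vecMulLinear (σ.permMatrix F)) A := by
  subst hAspan hBspan
  have hA := range_vecMulLinear_transpose_mul_inv_mul GA
    (isUnit_mul_transpose_of_inf_dualCode_eq_bot hAind hAhull)
  have hB := range_vecMulLinear_transpose_mul_inv_mul GB
    (isUnit_mul_transpose_of_inf_dualCode_eq_bot hBind hBhull)
  have hrange := range_vecMulLinear_transpose_mul_mul (isUnit_permMatrix σ)
    (GAᵀ * (GA * GAᵀ)⁻¹ * GA)
  rw [← h] at hrange
  exact ⟨hrange, hB.symm.trans (hrange.trans (congrArg _ hA))⟩
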